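/- Let P₁ = (I 0) and P₂ = (A b) be two non-coincident finite cameras (A ∈ ℝ^{3×3} nonsingular, b ∈ ℝ³ nonzero). If (x,y) ∈ ℝ²×ℝ² is (A,b)-regular and ŷᵀ [b]_× A x̂ = 0, then there exists w ∈ ℝ⁴∖{0} such that P₁ w is a nonzero scalar multiple of x̂ and P₂ w is a nonzero scalar multiple of ŷ. -/

import Mathlib

open Matrix

noncomputable section

/-- For `u ∈ ℝⁿ`, `hat u = (u, 1)ᵀ ∈ ℝⁿ⁺¹`. -/
def hat {n : ℕ} (u : Fin n → ℝ) : Fin (n + 1) → ℝ := Fin.snoc u 1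

/-- The 3×4 matrix `(A b)` with left 3×3 block `A` and last column `b`. -/
def cam (A : Matrix (Fin 3) (Fin 3) ℝ) (b : Fin 3 → ℝ) : Matrix (Fin 3) (Fin 4) ℝ :=
  Matrix.of fun i => Fin.snoc (A i) (b i)

/-- The left 3×3 block of a 3×4 matrix. -/
def leftBlock (P : Matrix (Fin 3) (Fin 4) ℝ) : Matrix (Fin 3) (Fin 3) ℝ :=
  P.submatrix id Fin.castSucc

/-- A (projective) camera is a real 3×4 matrix of rank 3. -/
def IsCamera (P : Matrix (Fin 3) (Fin 4) ℝ) : Prop := P.rank = 3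

/-- A finite camera: the left 3×3 block is nonsingular. -/
def IsFiniteCamera (P : Matrix (Fin 3) (Fin 4) ℝ) : Prop := IsUnit (leftBlock P).det

/-- Two cameras are coincident if their camera centers agree up to a nonzero scale;
for rank-3 cameras the center is the (one-dimensional) kernel, so this says the two
cameras share a common nonzero kernel vector. -/
def Coincident (P Q : Matrix (Fin 3) (Fin 4) ℝ) : Prop :=
  ∃ c : Fin 4 → ℝ, c ≠ 0 ∧ P.mulVec c = 0 ∧ Q.mulVec c = 0

/-- `u` is a nonzero scalar multiple of `v`. -/
def SimEq {n : ℕ} (u v : Fin n → ℝ) : Prop := ∃ c : ℝ, c ≠ 0 ∧ u = c • v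

/-- The skew-symmetric matrix `[v]ₓ` with `[v]ₓ w = v × w`. -/
def skew (v : Fin 3 → ℝ) : Matrix (Fin 3) (Fin 3) ℝ :=
  !![0, -v 2, v 1; v 2, 0, -v 0; -v 1, v 0, 0]

/-- `(x, y)` is `(A, b)`-irregular. -/
def Irregular (A : Matrix (Fin 3) (Fin 3) ℝ) (b : Fin 3 → ℝ) (x y : Fin 2 → ℝ) : Prop :=
  ((skew b * A).mulVec (hat x) = 0 ∧ Matrix.vecMul (hat y) (skew b) ≠ 0) ∨
  ((skew b * A).mulVec (hat x) ≠ 0 ∧ Matrix.vecMul (hat y) (skew b) = 0)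

/-!
Put `u = A x̂`, which is nonzero because `A` is invertible. The point `w = (x̂, t)` is seen by
`(I 0)` at `x̂` and by `(A b)` at `u + t b`, so it suffices to make `u + t b` a nonzero multiple
of `ŷ`. Regularity says `b × u = 0` exactly when `b × ŷ = 0`. If both vanish, `u` and `ŷ` are
multiples of `b` and `t = 0` works. Otherwise `b, u` are independent, and the epipolar constraint
`ŷ · (b × u) = 0` puts `ŷ = α b + β u` in their span, with `β ≠ 0` since `ŷ` is not parallel
to `b`; then `t = α / β`.
-/

lemma skew_mulVec (b u : Fin 3 → ℝ) : skew b *ᵥ u = b ⨯₃ u := by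
  ext i
  fin_cases i <;> simp [skew, mulVec, dotProduct, Fin.sum_univ_three, cross_apply] <;> ring

lemma vecMul_skew (y b : Fin 3 → ℝ) : y ᵥ* skew b = y ⨯₃ b := by
  ext i
  fin_cases i <;> simp [skew, vecMul, dotProduct, Fin.sum_univ_three, cross_apply] <;> ring

lemma cam_mulVec_snoc (A : Matrix (Fin 3) (Fin 3) ℝ) (b v : Fin 3 → ℝ) (t : ℝ) :
    cam A b *ᵥ Fin.snoc v t = A *ᵥ v + t • b := by
  ext i
  simp only [cam, mulVec, dotProduct, Fin.sum_univ_castSucc, of_apply, Fin.snoc_castSucc,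
    Fin.snoc_last]
  simp [mulVec, dotProduct, Fin.sum_univ_three, mul_comm t]

lemma hat_ne_zero {n : ℕ} (u : Fin n → ℝ) : hat u ≠ 0 :=
  fun h ↦ one_ne_zero (α := ℝ) (by simpa [hat] using congrFun h (Fin.last n))

lemma not_irregular_iff (A : Matrix (Fin 3) (Fin 3) ℝ) (b : Fin 3 → ℝ) (x y : Fin 2 → ℝ) :
    ¬ Irregular A b x y ↔ (b ⨯₃ (A *ᵥ hat x) = 0 ↔ b ⨯₃ hat y = 0) := by
  rw [Irregular, ← mulVec_mulVec, skew_mulVec, vecMul_skew, ← cross_anticomm b (hat y), ne_eq,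
    neg_eq_zero]
  tauto

lemma exists_smul_eq_of_cross_eq_zero {F : Type*} [Field F] {b v : Fin 3 → F} (hb : b ≠ 0)
    (h : b ⨯₃ v = 0) : ∃ a : F, a • b = v := by
  by_contra! hv
  exact crossProduct_ne_zero_iff_linearIndependent.mpr ((LinearIndependent.pair_iff' hb).mpr hv) h

lemma exists_smul_add_smul_eq_of_dotProduct_cross_eq_zero {F : Type*} [Field F]
    {y b u : Fin 3 → F} (hbu : b ⨯₃ u ≠ 0) (h : y ⬝ᵥ b ⨯₃ u = 0) :
    ∃ α β : F, α • b + β • u = y := by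
  have hdep : ¬ LinearIndependent F ![y, b, u] := fun hli ↦ by
    have hunit := linearIndependent_rows_iff_isUnit (A := of ![y, b, u]) |>.mp hli
    rw [isUnit_iff_isUnit_det] at hunit
    exact hunit.ne_zero (by rw [← h, triple_product_eq_det]; rfl)
  rw [crossProduct_ne_zero_iff_linearIndependent] at hbu
  have hspan : y ∈ Submodule.span F (Set.range ![b, u]) := by
    by_contra hy
    exact hdep (linearIndependent_finCons.mpr ⟨hbu, hy⟩)
  rwa [range_cons_cons_empty, Submodule.mem_span_pair] at hspan

lemma exists_add_smul_eq_smul_of_dotProduct_cross_eq_zero {F : Type*} [Field F]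
    {b u y : Fin 3 → F} (hb : b ≠ 0) (hu : u ≠ 0) (hy : y ≠ 0)
    (hcross : b ⨯₃ u = 0 ↔ b ⨯₃ y = 0) (h : y ⬝ᵥ b ⨯₃ u = 0) :
    ∃ t c : F, c ≠ 0 ∧ u + t • b = c • y := by
  by_cases hbu : b ⨯₃ u = 0
  · obtain ⟨k, rfl⟩ := exists_smul_eq_of_cross_eq_zero hb hbu
    obtain ⟨m, rfl⟩ := exists_smul_eq_of_cross_eq_zero hb (hcross.mp hbu)
    have hk : k ≠ 0 := by rintro rfl; simp at hu
    have hm : m ≠ 0 := by rintro rfl; simp at hy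
    refine ⟨0, k / m, div_ne_zero hk hm, ?_⟩
    rw [zero_smul, add_zero, smul_smul, div_mul_cancel₀ _ hm]
  · obtain ⟨α, β, rfl⟩ := exists_smul_add_smul_eq_of_dotProduct_cross_eq_zero hbu h
    have hβ : β ≠ 0 := by
      rintro rfl
      exact hbu (hcross.mpr (by simp [cross_self]))
    refine ⟨α / β, β⁻¹, inv_ne_zero hβ, ?_⟩
    rw [smul_add, smul_smul, smul_smul, inv_mul_cancel₀ hβ, one_smul, div_eq_inv_mul, add_comm]

/-- If `(x, y)` is `(A, b)`-regular and satisfies the epipolar constraint, then it admits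
a reconstruction (possibly at infinity) by the cameras `(I 0)` and `(A b)`. -/
theorem stmt10 (A : Matrix (Fin 3) (Fin 3) ℝ) (b : Fin 3 → ℝ)
    (hA : IsUnit A.det) (hb : b ≠ 0) (x y : Fin 2 → ℝ)
    (hreg : ¬ Irregular A b x y)
    (hep : hat y ⬝ᵥ (skew b * A).mulVec (hat x) = 0) :
    ∃ w : Fin 4 → ℝ, w ≠ 0 ∧
      SimEq ((cam 1 0).mulVec w) (hat x) ∧
      SimEq ((cam A b).mulVec w) (hat y) := by
  have hinj : Function.Injective (A *ᵥ ·) :=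
    mulVec_injective_iff_isUnit.mpr ((isUnit_iff_isUnit_det A).mpr hA)
  have hu : A *ᵥ hat x ≠ 0 := fun h ↦ hat_ne_zero x (hinj (h.trans (mulVec_zero A).symm))
  rw [← mulVec_mulVec, skew_mulVec] at hep
  obtain ⟨t, c, hc, hw⟩ := exists_add_smul_eq_smul_of_dotProduct_cross_eq_zero hb hu
    (hat_ne_zero y) ((not_irregular_iff A b x y).mp hreg) hep
  have hx : cam 1 0 *ᵥ Fin.snoc (hat x) t = hat x := by
    rw [cam_mulVec_snoc, one_mulVec, smul_zero, add_zero]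
  refine ⟨Fin.snoc (hat x) t, ?_, ⟨1, one_ne_zero, by rw [hx, one_smul]⟩, ⟨c, hc, ?_⟩⟩
  · intro hw0
    exact hat_ne_zero x (by rw [← hx, hw0, mulVec_zero])
  · rwa [cam_mulVec_snoc]
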